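/- arXiv:2203.08188 — 2 statements merged into one kernel-verified Lean document; each statement's English description precedes it below -/
import Mathlib

section
/- Jacobi triple product identity: as formal power series, ∏_{j=1}^∞ (1 - q^j)(1 + u q^j)(1 + u^{-1} q^{j-1}) = ∑_{m ∈ ℤ} u^m q^{m(m+1)/2}. -/
/-!
Cauchy's argument. The `q`-binomial theorem
`∏_{j<n} (1 + y q^j) = ∑_k [n, k]_q q^{k(k-1)/2} y^k`, taken at `n = 2N` and `y = u q^{1-N}`,
is, after splitting off a monomial, the finite identity
`∏_{j<N} (1 + u q^{j+1})(1 + u⁻¹ q^j) = ∑_{|m| ≤ N} [2N, N+m]_q u^m q^{m(m+1)/2}`.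
For `‖q‖ < 1` the Gaussian binomials `[2N, N+m]_q = (q;q)_{2N} / ((q;q)_{N+m} (q;q)_{N-m})` are
uniformly bounded and tend to `1 / (q;q)_∞` as `N → ∞`, so by Tannery's theorem the right-hand
side tends to `(q;q)_∞⁻¹ ∑_m u^m q^{m(m+1)/2}`. Multiplying by `(q;q)_N → (q;q)_∞` gives the
identity. At `q = 0` both sides equal `1 + u⁻¹`.
-/

open Finset Filter Topology

section CommRing

variable {R : Type*} [CommRing R]

def qPochhammer (q : R) (n : ℕ) : R := ∏ j ∈ range n, (1 - q ^ (j + 1))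

def gaussBinom (q : R) : ℕ → ℕ → R
  | _, 0 => 1
  | 0, _ + 1 => 0
  | n + 1, k + 1 => gaussBinom q n k + q ^ (k + 1) * gaussBinom q n (k + 1)

variable (q : R)

lemma qPochhammer_succ (n : ℕ) : qPochhammer q (n + 1) = qPochhammer q n * (1 - q ^ (n + 1)) :=
  prod_range_succ _ _

@[simp] lemma gaussBinom_zero_right (n : ℕ) : gaussBinom q n 0 = 1 := by cases n <;> rfl

lemma gaussBinom_succ_succ (n k : ℕ) :
    gaussBinom q (n + 1) (k + 1) = gaussBinom q n k + q ^ (k + 1) * gaussBinom q n (k + 1) :=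
  rfl

lemma gaussBinom_eq_zero_of_lt : ∀ {n k : ℕ}, n < k → gaussBinom q n k = 0
  | 0, _ + 1, _ => rfl
  | n + 1, k + 1, h => by
    rw [gaussBinom_succ_succ, gaussBinom_eq_zero_of_lt (by omega),
      gaussBinom_eq_zero_of_lt (by omega), mul_zero, add_zero]

@[simp] lemma gaussBinom_self (n : ℕ) : gaussBinom q n n = 1 := by
  induction n with
  | zero => rfl
  | succ n ih =>
    rw [gaussBinom_succ_succ, ih, gaussBinom_eq_zero_of_lt q n.lt_succ_self, mul_zero, add_zero]

theorem gaussBinom_add_mul_qPochhammer (a b : ℕ) :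
    gaussBinom q (a + b) a * qPochhammer q a * qPochhammer q b = qPochhammer q (a + b) := by
  induction a generalizing b with
  | zero => simp [qPochhammer]
  | succ a iha =>
    induction b with
    | zero => simp [qPochhammer]
    | succ b ihb =>
      have h := iha (b + 1)
      rw [show a + 1 + b = a + (b + 1) by omega] at ihb
      rw [show a + 1 + (b + 1) = a + (b + 1) + 1 by omega, gaussBinom_succ_succ,
        qPochhammer_succ q (a + (b + 1))]
      rw [qPochhammer_succ q b] at h ⊢
      rw [qPochhammer_succ q a] at ihb ⊢
      linear_combination (1 - q ^ (a + 1)) * h + q ^ (a + 1) * (1 - q ^ (b + 1)) * ihb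

theorem prod_one_add_mul_pow_eq_sum (y : R) (n : ℕ) :
    ∏ j ∈ range n, (1 + y * q ^ j) =
      ∑ k ∈ range (n + 1), gaussBinom q n k * q ^ k.choose 2 * y ^ k := by
  induction n generalizing y with
  | zero => simp
  | succ n ih =>
    have hlow : ∑ k ∈ range (n + 1), gaussBinom q n k * q ^ (k + 1).choose 2 * y ^ (k + 1) =
        y * ∑ k ∈ range (n + 1), gaussBinom q n k * q ^ k.choose 2 * (y * q) ^ k := by
      rw [mul_sum]
      refine sum_congr rfl fun k _ => ?_
      rw [Nat.choose_succ_succ', Nat.choose_one_right]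
      ring
    have hhigh : ∑ k ∈ range (n + 1),
        q ^ (k + 1) * gaussBinom q n (k + 1) * q ^ (k + 1).choose 2 * y ^ (k + 1) =
        ∑ k ∈ range (n + 1), gaussBinom q n k * q ^ k.choose 2 * (y * q) ^ k - 1 := by
      rw [sum_range_succ, gaussBinom_eq_zero_of_lt q n.lt_succ_self, sum_range_succ' _ n]
      simp only [mul_zero, zero_mul, add_zero, gaussBinom_zero_right, Nat.choose_zero_succ,
        pow_zero, mul_one, add_sub_cancel_right]
      exact sum_congr rfl fun k _ => by ring
    calc ∏ j ∈ range (n + 1), (1 + y * q ^ j)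
        = (∑ k ∈ range (n + 1), gaussBinom q n k * q ^ k.choose 2 * (y * q) ^ k) * (1 + y) := by
          rw [prod_range_succ', ← ih (y * q)]
          simp only [pow_succ', pow_zero, mul_one, mul_assoc]
      _ = ∑ k ∈ range (n + 1), gaussBinom q (n + 1) (k + 1) * q ^ (k + 1).choose 2 * y ^ (k + 1)
            + 1 := by
          simp only [gaussBinom_succ_succ, add_mul, sum_add_distrib]
          linear_combination -hlow - hhigh
      _ = _ := by
          rw [sum_range_succ' _ (n + 1)]
          simp

end CommRing

lemma Int.two_mul_natCast_choose_two (n : ℕ) : 2 * (n.choose 2 : ℤ) = n * (n - 1) := by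
  qify
  rw [Nat.cast_choose_two]
  ring

lemma Int.sub_mul_sub_add_one_ediv_two (k N : ℕ) :
    ((k : ℤ) - N) * ((k : ℤ) - N + 1) / 2 = N.choose 2 + k.choose 2 + (1 - N) * k := by
  refine Int.ediv_eq_of_eq_mul_right two_ne_zero ?_
  linear_combination -Int.two_mul_natCast_choose_two N - Int.two_mul_natCast_choose_two k

lemma sum_Icc_neg_eq_sum_range {M : Type*} [AddCommMonoid M] (f : ℤ → M) (N : ℕ) :
    ∑ m ∈ Icc (-(N : ℤ)) N, f m = ∑ k ∈ range (2 * N + 1), f (k - N) := by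
  refine (sum_nbij' (fun k : ℕ => (k : ℤ) - N) (fun m => (m + N).toNat) ?_ ?_ ?_ ?_ ?_).symm <;>
    intros <;> simp_all <;> omega

section Field

variable {K : Type*} [Field K]

def thetaTerm (u q : K) (m : ℤ) : K := u ^ m * q ^ (m * (m + 1) / 2)

variable {q u : K}

lemma thetaTerm_add_one (hq : q ≠ 0) (hu : u ≠ 0) (m : ℤ) :
    thetaTerm u q (m + 1) = thetaTerm u q m * (u * q ^ (m + 1)) := by
  rw [thetaTerm, thetaTerm, show (m + 1) * (m + 1 + 1) = m * (m + 1) + (m + 1) * 2 by ring,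
    Int.add_mul_ediv_right _ _ two_ne_zero, zpow_add₀ hq, zpow_add_one₀ hu]
  ring

lemma gaussBinom_add_eq_div {a b : ℕ} (ha : qPochhammer q a ≠ 0) (hb : qPochhammer q b ≠ 0) :
    gaussBinom q (a + b) a = qPochhammer q (a + b) / (qPochhammer q a * qPochhammer q b) := by
  rw [← gaussBinom_add_mul_qPochhammer, mul_assoc, mul_div_cancel_right₀ _ (mul_ne_zero ha hb)]

lemma prod_range_jacobi_eq_prod_range_two_mul (hq : q ≠ 0) (hu : u ≠ 0) (N : ℕ) :
    ∏ j ∈ range N, ((1 + u * q ^ (j + 1)) * (1 + u⁻¹ * q ^ j)) =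
      u ^ (-(N : ℤ)) * q ^ N.choose 2 *
        ∏ j ∈ range (2 * N), (1 + u * q ^ (1 - (N : ℤ)) * q ^ j) := by
  have hhigh (j : ℕ) : u * q ^ (1 - (N : ℤ)) * q ^ (N + j) = u * q ^ (j + 1) := by
    rw [mul_assoc, ← zpow_natCast, ← zpow_natCast, ← zpow_add₀ hq]
    push_cast
    ring_nf
  have hlow : ∀ j ∈ range N, 1 + u * q ^ (1 - (N : ℤ)) * q ^ (N - 1 - j) =
      u * (q ^ j)⁻¹ * (1 + u⁻¹ * q ^ j) := by
    intro j hj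
    have hjN : j < N := mem_range.mp hj
    rw [mul_assoc, ← zpow_natCast q (N - 1 - j), ← zpow_add₀ hq,
      show 1 - (N : ℤ) + ((N - 1 - j : ℕ) : ℤ) = -j by omega, zpow_neg, zpow_natCast]
    field_simp
    ring
  have hpow : ∏ j ∈ range N, q ^ j = q ^ N.choose 2 := by
    rw [prod_pow_eq_pow_sum, sum_range_id, Nat.choose_two_right]
  calc ∏ j ∈ range N, ((1 + u * q ^ (j + 1)) * (1 + u⁻¹ * q ^ j))
      = u ^ (-(N : ℤ)) * q ^ N.choose 2 * ((∏ j ∈ range N, (u * (q ^ j)⁻¹ * (1 + u⁻¹ * q ^ j))) *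
          ∏ j ∈ range N, (1 + u * q ^ (1 - (N : ℤ)) * q ^ (N + j))) := by
        simp only [hhigh, prod_mul_distrib, prod_const, card_range, prod_inv_distrib, hpow,
          zpow_neg, zpow_natCast]
        field_simp
    _ = _ := by
        rw [two_mul, prod_range_add,
          ← prod_range_reflect (fun j => 1 + u * q ^ (1 - (N : ℤ)) * q ^ j) N, prod_congr rfl hlow]

theorem prod_range_jacobi_eq_sum_Icc (hq : q ≠ 0) (hu : u ≠ 0) (N : ℕ) :
    ∏ j ∈ range N, ((1 + u * q ^ (j + 1)) * (1 + u⁻¹ * q ^ j)) =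
      ∑ m ∈ Icc (-(N : ℤ)) N, gaussBinom q (2 * N) (m + N).toNat * thetaTerm u q m := by
  rw [prod_range_jacobi_eq_prod_range_two_mul hq hu, prod_one_add_mul_pow_eq_sum, mul_sum,
    sum_Icc_neg_eq_sum_range]
  refine sum_congr rfl fun k _ => ?_
  rw [sub_add_cancel, Int.toNat_natCast, thetaTerm, Int.sub_mul_sub_add_one_ediv_two,
    zpow_add₀ hq, zpow_add₀ hq, zpow_mul, sub_eq_neg_add (k : ℤ), zpow_add₀ hu]
  simp only [zpow_natCast, mul_pow]
  ring

end Field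

lemma summable_int_of_ratio_tendsto_zero {R : Type*} [NormedRing R] [CompleteSpace R]
    {f : ℤ → R} {c d : ℕ → R} (hc : Tendsto c atTop (𝓝 0)) (hd : Tendsto d atTop (𝓝 0))
    (hfc : ∀ n : ℕ, f (n + 1) = f n * c n) (hfd : ∀ n : ℕ, f (-(n + 1)) = f (-n) * d n) :
    Summable f := by
  have ratio {g e : ℕ → R} (he : Tendsto e atTop (𝓝 0)) (hg : ∀ n, g (n + 1) = g n * e n) :
      Summable g := by
    refine summable_of_ratio_norm_eventually_le one_half_lt_one ?_
    filter_upwards [(tendsto_norm_zero.comp he).eventually_le_const one_half_pos] with n hn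
    rw [hg, mul_comm (1 / 2 : ℝ)]
    exact (norm_mul_le _ _).trans (by gcongr; exact hn)
  exact .of_nat_of_neg (ratio hc (by exact_mod_cast hfc)) (ratio hd (by exact_mod_cast hfd))

lemma tendsto_sum_Icc_mul_of_bounded {R : Type*} [NormedRing R] [CompleteSpace R] {a : ℤ → R}
    (ha : Summable (‖a ·‖)) {w : ℕ → ℤ → R} {c : R} {C : ℝ} (hC : ∀ N m, ‖w N m‖ ≤ C)
    (hw : ∀ m, Tendsto (w · m) atTop (𝓝 c)) :
    Tendsto (fun N : ℕ => ∑ m ∈ Icc (-(N : ℤ)) N, w N m * a m) atTop (𝓝 (c * ∑' m, a m)) := by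
  classical
  let f (N : ℕ) (m : ℤ) : R := if m ∈ Icc (-(N : ℤ)) N then w N m * a m else 0
  have hf (N : ℕ) : ∑' m, f N m = ∑ m ∈ Icc (-(N : ℤ)) N, w N m * a m := by
    rw [tsum_eq_sum fun m hm => if_neg hm]
    exact sum_congr rfl fun m hm => if_pos hm
  have hC₀ : 0 ≤ C := (norm_nonneg _).trans (hC 0 0)
  rw [← ha.of_norm.tsum_mul_left]
  simp only [← hf]
  refine tendsto_tsum_of_dominated_convergence (ha.mul_left C) (fun m => ?_)
    (.of_forall fun N m => ?_)
  · refine ((hw m).mul_const (a m)).congr' ?_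
    filter_upwards [eventually_ge_atTop m.natAbs] with N hN
    exact (if_pos (mem_Icc.mpr (by omega))).symm
  · simp only [f]
    split_ifs
    · exact (norm_mul_le _ _).trans (by gcongr; exact hC N m)
    · rw [norm_zero]
      positivity

section Complex

variable {q : ℂ} (hq : ‖q‖ < 1)
include hq

lemma summable_norm_mul_pow (c : ℂ) : Summable fun j : ℕ => ‖c * q ^ j‖ := by
  simpa [norm_mul, norm_pow] using (summable_geometric_of_lt_one (norm_nonneg q) hq).mul_left ‖c‖

lemma one_sub_pow_succ_ne_zero (j : ℕ) : 1 - q ^ (j + 1) ≠ 0 := by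
  refine sub_ne_zero.mpr fun h => ?_
  have : ‖q ^ (j + 1)‖ < 1 := by
    rw [norm_pow]
    exact pow_lt_one₀ (norm_nonneg q) hq j.succ_ne_zero
  rw [← h, norm_one] at this
  exact this.false

lemma qPochhammer_ne_zero (n : ℕ) : qPochhammer q n ≠ 0 :=
  prod_ne_zero_iff.mpr fun j _ => one_sub_pow_succ_ne_zero hq j

lemma tendsto_qPochhammer : Tendsto (qPochhammer q) atTop (𝓝 (∏' j : ℕ, (1 - q ^ (j + 1)))) :=
  (ModularForm.multipliable_one_sub_pow hq).hasProd.tendsto_prod_nat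

lemma tprod_one_sub_pow_succ_ne_zero : ∏' j : ℕ, (1 - q ^ (j + 1)) ≠ 0 := by
  simp only [sub_eq_add_neg]
  refine tprod_one_add_ne_zero_of_summable (fun j => ?_) ?_
  · simpa [← sub_eq_add_neg] using one_sub_pow_succ_ne_zero hq j
  · simpa using (summable_nat_add_iff 1).mpr (summable_norm_mul_pow hq 1)

lemma exists_norm_gaussBinom_le : ∃ C, ∀ n k, ‖gaussBinom q n k‖ ≤ C := by
  obtain ⟨B, hB⟩ := isBounded_iff_forall_norm_le.mp
    (Metric.isBounded_range_of_tendsto _ (tendsto_qPochhammer hq))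
  obtain ⟨D, hD⟩ := isBounded_iff_forall_norm_le.mp
    (Metric.isBounded_range_of_tendsto _
      ((tendsto_qPochhammer hq).inv₀ (tprod_one_sub_pow_succ_ne_zero hq)))
  have hB' (n : ℕ) : ‖qPochhammer q n‖ ≤ B := hB _ (Set.mem_range_self n)
  have hD' (n : ℕ) : ‖(qPochhammer q n)⁻¹‖ ≤ D := hD _ (Set.mem_range_self n)
  have hB₀ : 0 ≤ B := (norm_nonneg _).trans (hB' 0)
  have hD₀ : 0 ≤ D := (norm_nonneg _).trans (hD' 0)
  refine ⟨B * D * D, fun n k => ?_⟩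
  rcases le_or_gt k n with hk | hk
  · obtain ⟨b, rfl⟩ := Nat.exists_eq_add_of_le hk
    rw [gaussBinom_add_eq_div (qPochhammer_ne_zero hq k) (qPochhammer_ne_zero hq b),
      div_eq_mul_inv, mul_inv, ← mul_assoc]
    refine norm_mul₃_le.trans ?_
    gcongr
    exacts [hB' _, hD' _, hD' _]
  · rw [gaussBinom_eq_zero_of_lt q hk, norm_zero]
    positivity

lemma tendsto_gaussBinom_two_mul (m : ℤ) :
    Tendsto (fun N : ℕ => gaussBinom q (2 * N) (m + N).toNat) atTop
      (𝓝 (∏' j : ℕ, (1 - q ^ (j + 1)))⁻¹) := by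
  set P := ∏' j : ℕ, (1 - q ^ (j + 1))
  have hP : P ≠ 0 := tprod_one_sub_pow_succ_ne_zero hq
  have hE {f : ℕ → ℕ} (hf : ∀ b, ∀ N ≥ b + m.natAbs, b ≤ f N) :
      Tendsto (fun N => qPochhammer q (f N)) atTop (𝓝 P) :=
    (tendsto_qPochhammer hq).comp (tendsto_atTop_atTop.mpr fun b => ⟨b + m.natAbs, hf b⟩)
  have hlim := (hE (f := (2 * ·)) (by omega)).div
    ((hE (f := fun N => (m + N).toNat) (by omega)).mul (hE (f := fun N => (N - m).toNat) (by omega)))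
    (mul_ne_zero hP hP)
  rw [show P / (P * P) = P⁻¹ by field_simp] at hlim
  refine hlim.congr' ?_
  filter_upwards [eventually_ge_atTop m.natAbs] with N hN
  rw [Pi.div_apply, show 2 * N = (m + N).toNat + (N - m).toNat by omega,
    gaussBinom_add_eq_div (qPochhammer_ne_zero hq _) (qPochhammer_ne_zero hq _)]

lemma summable_norm_thetaTerm {u : ℂ} (hq0 : q ≠ 0) (hu : u ≠ 0) :
    Summable fun m : ℤ => ‖thetaTerm u q m‖ := by
  refine summable_int_of_ratio_tendsto_zero (c := fun n => ‖u * q ^ (n + 1)‖)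
    (d := fun n => ‖u⁻¹ * q ^ n‖)
    ((summable_nat_add_iff 1).mpr (summable_norm_mul_pow hq u)).tendsto_atTop_zero
    (summable_norm_mul_pow hq u⁻¹).tendsto_atTop_zero (fun n => ?_) (fun n => ?_)
  · rw [thetaTerm_add_one hq0 hu, norm_mul,
      show q ^ ((n : ℤ) + 1) = q ^ (n + 1) by exact_mod_cast zpow_natCast q (n + 1)]
  · have hinv : u * q ^ (-(n + 1 : ℤ) + 1) * (u⁻¹ * q ^ n) = 1 := by
      rw [show -(n + 1 : ℤ) + 1 = -n by ring, zpow_neg, zpow_natCast]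
      field_simp
    rw [show -(n : ℤ) = -(n + 1) + 1 by ring, thetaTerm_add_one hq0 hu, ← norm_mul, mul_assoc,
      hinv, mul_one]

lemma multipliable_jacobi (u : ℂ) :
    Multipliable fun j : ℕ => (1 - q ^ (j + 1)) * (1 + u * q ^ (j + 1)) * (1 + u⁻¹ * q ^ j) :=
  ((ModularForm.multipliable_one_sub_pow hq).mul (multipliable_one_add_of_summable
    ((summable_nat_add_iff 1).mpr (summable_norm_mul_pow hq u)))).mul
    (multipliable_one_add_of_summable (summable_norm_mul_pow hq u⁻¹))

end Complex

lemma jacobi_triple_product_zero {K : Type*} [Field K] [TopologicalSpace K] (u : K) :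
    ∏' j : ℕ, ((1 - (0 : K) ^ (j + 1)) * (1 + u * 0 ^ (j + 1)) * (1 + u⁻¹ * 0 ^ j)) =
      ∑' m : ℤ, u ^ m * (0 : K) ^ (m * (m + 1) / 2) := by
  rw [tprod_eq_prod (s := {0}) fun j hj => by simp [zero_pow (mem_singleton.not.mp hj)],
    tsum_eq_sum (s := {0, -1}) fun m hm => ?_]
  · simp
  · refine mul_eq_zero_of_right _ (zero_zpow _ fun h => hm ?_)
    have h2 := Int.mul_ediv_cancel' (Int.even_mul_succ_self m).two_dvd
    rw [h, mul_zero, eq_comm, mul_eq_zero] at h2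
    rcases h2 with h2 | h2 <;> simp [h2, eq_neg_iff_add_eq_zero]

/-- **Jacobi triple product identity.** For `‖q‖ < 1` and `u ≠ 0`,
`∏_{j=1}^∞ (1 - q^j)(1 + u q^j)(1 + u⁻¹ q^{j-1}) = ∑_{m ∈ ℤ} u^m q^{m(m+1)/2}`. -/
theorem jacobi_triple_product (q u : ℂ) (hq : ‖q‖ < 1) (hu : u ≠ 0) :
    ∏' j : ℕ, ((1 - q ^ (j + 1)) * (1 + u * q ^ (j + 1)) * (1 + u⁻¹ * q ^ j))
      = ∑' m : ℤ, u ^ m * q ^ (m * (m + 1) / 2) := by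
  rcases eq_or_ne q 0 with rfl | hq0
  · exact jacobi_triple_product_zero u
  obtain ⟨C, hC⟩ := exists_norm_gaussBinom_le hq
  have hlim := (tendsto_qPochhammer hq).mul (tendsto_sum_Icc_mul_of_bounded
    (summable_norm_thetaTerm hq hq0 hu) (fun _ _ => hC _ _) (tendsto_gaussBinom_two_mul hq))
  rw [mul_inv_cancel_left₀ (tprod_one_sub_pow_succ_ne_zero hq)] at hlim
  refine tendsto_nhds_unique (multipliable_jacobi hq u).hasProd.tendsto_prod_nat
    (hlim.congr fun N => ?_)
  rw [← prod_range_jacobi_eq_sum_Icc hq0 hu, qPochhammer, ← prod_mul_distrib]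
  exact prod_congr rfl fun j _ => by ring
end

section
/- Let k ∉ ℚ, h^∨_osp = n + 1/2, h^∨_sp = n + 1, and ℓ defined by 1/(k + h^∨_sp) + 1/(ℓ + h^∨_sp) = 2. For weights λ, μ and a Weyl group element w with dot action w ∘ λ = w(λ + ρ_sp) - ρ_sp, define Δ_{w∘λ, μ} = m_k^osp(μ) - m_k^sp(λ) + (w∘λ - μ | w∘λ - μ + 2ρ̄₁), where m_k^osp(μ) = (μ | μ + 2ρ_osp)/(2(k + h^∨_osp)) and m_k^sp(λ) = (λ | λ + 2ρ_sp)/(2(k + h^∨_sp)). Then Δ_{w∘λ, μ} = m_ℓ^sp(w∘λ - 2(ℓ + h^∨_sp)μ) - (w∘λ - 2(ℓ + h^∨_sp)μ | ρ^∨_sp), where m_ℓ^sp(ν) = (ν | ν + 2ρ_sp)/(2(ℓ + h^∨_sp)). -/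
open scoped RealInnerProductSpace

/-!
The dot action preserves `(λ | λ + 2ρ) = ‖λ + ρ‖² - ‖ρ‖²`, so `m_k^sp(λ) = m_k^sp(w ∘ λ)` and the
claim only involves `ν = w ∘ λ` and `μ`. Writing `A = k + h^∨_sp`, `B = ℓ + h^∨_sp`, the relation
`1/A + 1/B = 2` gives `2B = 2A/(2A - 1)`, while `k + h^∨_osp = A - 1/2` and `ρ^∨_sp = 2(ρ_sp - ρ̄₁)`;
after clearing denominators both sides are the same polynomial in the pairwise inner products of
`ν, μ, ρ_sp, ρ̄₁`.
-/

section

variable {V : Type*} [NormedAddCommGroup V] [InnerProductSpace ℝ V]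

theorem real_inner_self_add_two_smul (x ρ : V) :
    ⟪x, x + (2 : ℝ) • ρ⟫ = ‖x + ρ‖ ^ 2 - ‖ρ‖ ^ 2 := by
  simp only [← real_inner_self_eq_norm_sq, inner_add_left, inner_add_right,
    real_inner_smul_right, real_inner_comm x ρ]
  ring

theorem inner_dot_action_self (w : V →ₗᵢ[ℝ] V) (lam ρ : V) :
    ⟪w (lam + ρ) - ρ, w (lam + ρ) - ρ + (2 : ℝ) • ρ⟫ = ⟪lam, lam + (2 : ℝ) • ρ⟫ := by
  rw [real_inner_self_add_two_smul, real_inner_self_add_two_smul, sub_add_cancel,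
    w.norm_map]

theorem inner_identity_of_inv_add_inv_eq_two {A B : ℝ} (hA : A ≠ 0) (hB : B ≠ 0)
    (hAB : 1 / A + 1 / B = 2) (ν μ ρ ρ₁ : V) :
    ⟪μ, μ + (2 : ℝ) • (ρ - ρ₁)⟫ / (2 * (A - 1 / 2)) - ⟪ν, ν + (2 : ℝ) • ρ⟫ / (2 * A)
        + ⟪ν - μ, ν - μ + (2 : ℝ) • ρ₁⟫
      = ⟪ν - (2 * B) • μ, ν - (2 * B) • μ + (2 : ℝ) • ρ⟫ / (2 * B)
        - ⟪ν - (2 * B) • μ, (2 : ℝ) • (ρ - ρ₁)⟫ := by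
  have hA' : 2 * A - 1 ≠ 0 := by
    intro h
    rw [show A = 1 / 2 by linarith] at hAB
    simp_all
  have hB' : B = A / (2 * A - 1) := by
    rw [eq_div_iff hA']
    field_simp at hAB
    linarith
  simp only [inner_add_right, inner_sub_left, inner_sub_right,
    real_inner_smul_left, real_inner_smul_right, real_inner_comm ν]
  subst hB'
  field_simp
  ring

end

theorem delta_lambda_mu_general {V : Type*} [NormedAddCommGroup V] [InnerProductSpace ℝ V]
    (n : ℕ) (k l hsp hosp : ℝ) (hk : Irrational k)
    (hhsp : hsp = (n : ℝ) + 1) (hhosp : hosp = (n : ℝ) + 1 / 2)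
    (hl : 1 / (k + hsp) + 1 / (l + hsp) = 2)
    (ρsp ρ1 ρosp ρv lam mu : V) (w : V ≃ₗᵢ[ℝ] V)
    (hρosp : ρosp = ρsp - ρ1) (hρv : ρosp = (1 / 2 : ℝ) • ρv) :
    ⟪mu, mu + (2 : ℝ) • ρosp⟫ / (2 * (k + hosp))
        - ⟪lam, lam + (2 : ℝ) • ρsp⟫ / (2 * (k + hsp))
        + ⟪(w (lam + ρsp) - ρsp) - mu,
            ((w (lam + ρsp) - ρsp) - mu) + (2 : ℝ) • ρ1⟫
      = ⟪(w (lam + ρsp) - ρsp) - (2 * (l + hsp)) • mu,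
            ((w (lam + ρsp) - ρsp) - (2 * (l + hsp)) • mu) + (2 : ℝ) • ρsp⟫
          / (2 * (l + hsp))
        - ⟪(w (lam + ρsp) - ρsp) - (2 * (l + hsp)) • mu, ρv⟫ := by
  have hA : Irrational (k + hsp) := by
    rw [hhsp]
    exact_mod_cast hk.add_natCast (n + 1)
  have hB : l + hsp ≠ 0 := by
    intro h0
    rw [h0, div_zero, add_zero, div_eq_iff hA.ne_zero] at hl
    exact hA.ne_rat (1 / 2) (by push_cast; linarith)
  have hosp_eq : k + hosp = k + hsp - 1 / 2 := by rw [hhosp, hhsp]; ring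
  have hρv_eq : ρv = (2 : ℝ) • (ρsp - ρ1) := by
    rw [← hρosp, hρv, smul_smul]
    norm_num
  rw [hosp_eq, hρv_eq, hρosp, ← inner_dot_action_self w.toLinearIsometry lam ρsp]
  exact inner_identity_of_inv_add_inv_eq_two hA.ne_zero hB hl _ _ _ _

/-- Lemma on the conformal weight shift: with `k ∉ ℚ`, `h^∨_osp = n + 1/2`,
`h^∨_sp = n + 1`, `ℓ` defined by `1/(k + h^∨_sp) + 1/(ℓ + h^∨_sp) = 2`,
`ρ_osp = ρ_sp - ρ̄₁ = (1/2)ρ^∨_sp`, `|ρ̄₁|² = n/8`, and dot action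
`w ∘ λ = w(λ + ρ_sp) - ρ_sp` for an isometry `w`:
`Δ_{w∘λ,μ} := m_k^osp(μ) - m_k^sp(λ) + (w∘λ - μ | w∘λ - μ + 2ρ̄₁)`
equals `m_ℓ^sp(w∘λ - 2(ℓ+h^∨_sp)μ) - (w∘λ - 2(ℓ+h^∨_sp)μ | ρ^∨_sp)`,
where `m_k^g(ν) = (ν | ν + 2ρ_g)/(2(k + h^∨_g))`. -/
theorem delta_lambda_mu {V : Type*} [NormedAddCommGroup V] [InnerProductSpace ℝ V]
    (n : ℕ) (k l hsp hosp : ℝ) (hk : Irrational k)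
    (hhsp : hsp = (n : ℝ) + 1) (hhosp : hosp = (n : ℝ) + 1 / 2)
    (hl : 1 / (k + hsp) + 1 / (l + hsp) = 2)
    (ρsp ρ1 ρosp ρv lam mu : V) (w : V ≃ₗᵢ[ℝ] V)
    (hρosp : ρosp = ρsp - ρ1) (hρv : ρosp = (1 / 2 : ℝ) • ρv)
    (hρ1 : ⟪ρ1, ρ1⟫ = (n : ℝ) / 8) :
    ⟪mu, mu + (2 : ℝ) • ρosp⟫ / (2 * (k + hosp))
        - ⟪lam, lam + (2 : ℝ) • ρsp⟫ / (2 * (k + hsp))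
        + ⟪(w (lam + ρsp) - ρsp) - mu,
            ((w (lam + ρsp) - ρsp) - mu) + (2 : ℝ) • ρ1⟫
      = ⟪(w (lam + ρsp) - ρsp) - (2 * (l + hsp)) • mu,
            ((w (lam + ρsp) - ρsp) - (2 * (l + hsp)) • mu) + (2 : ℝ) • ρsp⟫
          / (2 * (l + hsp))
        - ⟪(w (lam + ρsp) - ρsp) - (2 * (l + hsp)) • mu, ρv⟫ :=
  delta_lambda_mu_general n k l hsp hosp hk hhsp hhosp hl ρsp ρ1 ρosp ρv lam mu w hρosp hρv
end
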